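/- Let $\alpha < \beta$ be real numbers, $\nu > 0$, and $\varphi, \bar u$ be measurable functions on a measure space $Q$ with $\alpha \le \bar u \le \beta$ a.e. Suppose $\int_Q (\varphi + \nu \bar u)(u - \bar u) \ge 0$ for all measurable $u$ with $\alpha \le u \le \beta$ a.e. (and $\varphi + \nu\bar u$ integrable against such differences). Then $\bar u(x) = \min\{\beta, \max\{\alpha, -\varphi(x)/\nu\}\}$ for a.e. $x \in Q$. -/

import Mathlib

/-!
Test the variational inequality with the projection `p = proj_{[α,β]}(-φ/ν)` itself.
Since `φ + ν ū = ν (ū + φ/ν)`, the projection inequality `(p + φ/ν)(ū - p) ≥ 0` gives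
`(φ + ν ū)(p - ū) ≤ -ν (p - ū)²` pointwise, so `0 ≤ ∫ (φ + ν ū)(p - ū) ≤ -ν ‖p - ū‖²` and `ū = p` a.e.
-/

open MeasureTheory Set

lemma min_max_mem_Icc {α β : ℝ} (hαβ : α ≤ β) (t : ℝ) : min β (max α t) ∈ Icc α β :=
  ⟨le_min hαβ (le_max_left _ _), min_le_left _ _⟩

lemma sub_mul_sub_min_max_nonneg {α β v : ℝ} (hαβ : α ≤ β) (hv : v ∈ Icc α β) (t : ℝ) :
    0 ≤ (min β (max α t) - t) * (v - min β (max α t)) := by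
  rcases le_total t α with htα | hαt
  · rw [max_eq_left htα, min_eq_right hαβ]
    exact mul_nonneg (by linarith) (by linarith [hv.1])
  · rw [max_eq_right hαt]
    rcases le_total β t with hβt | htβ
    · rw [min_eq_left hβt]
      exact mul_nonneg_of_nonpos_of_nonpos (by linarith) (by linarith [hv.2])
    · simp [min_eq_right htβ]

lemma mul_sub_min_max_le {α β ν φ u : ℝ} (hαβ : α ≤ β) (hν : 0 < ν) (hu : u ∈ Icc α β) :
    (φ + ν * u) * (min β (max α (-φ / ν)) - u) ≤ -(ν * (min β (max α (-φ / ν)) - u) ^ 2) := by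
  have hproj := sub_mul_sub_min_max_nonneg hαβ hu (-φ / ν)
  set t := -φ / ν
  have hφ : φ = -(ν * t) := by simp only [t]; field_simp
  rw [hφ]
  nlinarith [mul_nonneg hν.le hproj]

lemma ae_eq_of_integral_nonneg_of_le_neg_mul_sq {X : Type*} [MeasurableSpace X] {μ : Measure X}
    {c : ℝ} (hc : 0 < c) {f g h : X → ℝ} (hf : MemLp f 2 μ) (hg : MemLp g 2 μ)
    (hh : Integrable h μ) (hh_nonneg : 0 ≤ ∫ x, h x ∂μ)
    (hle : ∀ᵐ x ∂μ, h x ≤ -(c * (f x - g x) ^ 2)) : f =ᵐ[μ] g := by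
  set q : X → ℝ := fun x => c * (f x - g x) ^ 2
  have hq_nonneg : 0 ≤ q := fun x => by positivity
  have hq_int : Integrable q μ := (hf.sub hg).integrable_sq.const_mul c
  have hq_zero : ∫ x, q x ∂μ = 0 := by
    have : ∫ x, h x ∂μ ≤ ∫ x, -q x ∂μ := integral_mono_ae hh hq_int.neg hle
    rw [integral_neg] at this
    linarith [integral_nonneg (μ := μ) hq_nonneg]
  filter_upwards [(integral_eq_zero_iff_of_nonneg hq_nonneg hq_int).1 hq_zero] with x hx
  have : (f x - g x) ^ 2 = 0 := (mul_eq_zero.1 hx).resolve_left hc.ne'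
  exact sub_eq_zero.1 (pow_eq_zero_iff two_ne_zero |>.1 this)

/-- Pointwise projection formula: if `ū ∈ [α, β]` a.e. satisfies the variational
inequality `∫ (φ + ν ū)(u - ū) ≥ 0` for all admissible `u`, then
`ū(x) = proj_{[α,β]}(-φ(x)/ν)` a.e. -/
theorem stmt3 {X : Type*} [MeasurableSpace X] (μ : Measure X) [IsFiniteMeasure μ]
    (α β : ℝ) (hαβ : α < β) (ν : ℝ) (hν : 0 < ν)
    (φ ubar : X → ℝ) (hφ : MemLp φ 2 μ) (hubar : MemLp ubar 2 μ)
    (hubar_mem : ∀ᵐ x ∂μ, α ≤ ubar x ∧ ubar x ≤ β)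
    (hVI : ∀ u : X → ℝ, Measurable u → MemLp u 2 μ →
      (∀ᵐ x ∂μ, α ≤ u x ∧ u x ≤ β) →
      0 ≤ ∫ x, (φ x + ν * ubar x) * (u x - ubar x) ∂μ) :
    ∀ᵐ x ∂μ, ubar x = min β (max α (-(φ x) / ν)) := by
  -- `hVI` only admits measurable `u`, so `p` is built from a measurable version `ψ` of `φ`.
  obtain ⟨ψ, hψ_meas, hφψ⟩ := hφ.aestronglyMeasurable.aemeasurable
  set p : X → ℝ := fun x => min β (max α (-ψ x / ν))
  have hp_meas : Measurable p := by fun_prop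
  have hp_mem : ∀ᵐ x ∂μ, p x ∈ Icc α β := ae_of_all _ fun x => min_max_mem_Icc hαβ.le _
  have hp_L2 : MemLp p 2 μ := memLp_of_bounded hp_mem hp_meas.aestronglyMeasurable 2
  have hle : ∀ᵐ x ∂μ, (φ x + ν * ubar x) * (p x - ubar x) ≤ -(ν * (p x - ubar x) ^ 2) := by
    filter_upwards [hubar_mem, hφψ] with x hx hφψx
    rw [hφψx]
    exact mul_sub_min_max_le hαβ.le hν hx
  have hint : Integrable (fun x => (φ x + ν * ubar x) * (p x - ubar x)) μ :=
    (hφ.add (hubar.const_mul ν)).integrable_mul (hp_L2.sub hubar)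
  filter_upwards [ae_eq_of_integral_nonneg_of_le_neg_mul_sq hν hp_L2 hubar hint
    (hVI p hp_meas hp_L2 hp_mem) hle, hφψ] with x hpx hφψx
  rw [hφψx]
  exact hpx.symm
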